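/- With the Haar basis (e_ν)_{ν∈ℕ₀} on [0,1] and the midpoint interpolation operator T_n on 2^n dyadic intervals, the following identities hold: T_n(e_ν) = e_ν if ν ≤ 2^n − 1; for ℓ ≥ n and m ∈ {0,…,2^n − 1}, T_n(e_{k(ℓ,m)}) = c(ℓ)·1_{I_m} where k(n,m) = 2^n + m, c(n) = −2^{n/2}, and for ℓ > n, k(ℓ,m) = 2^ℓ + m·2^{ℓ−n} + 2^{ℓ−n−1}, c(ℓ) = 2^{ℓ/2}; and T_n(e_ν) = 0 for all other ν ≥ 2^n. -/

import Mathlib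

/-!
Write `ν = 2^L + M` with `M < 2^L`. For `y ≥ 0` the Haar function `e_ν(y)` depends only on
`⌊2^(L+1) y⌋`: it is `2^(L/2)` when this is `2M`, `-2^(L/2)` when it is `2M+1`, and `0`
otherwise. If `L < n`, this floor takes the same value at `x` and at the midpoint of the dyadic
interval of length `2^-n` containing `x`, so `T_n e_ν = e_ν`. If `L ≥ n`, then `2^(L+1)` times
the midpoint of `I_j` is the integer `(2j+1) 2^(L-n)`. By parity it can equal `2M+1` only when
`L = n` and `M = j`, and `2M` only when `L > n` and `M = j 2^(L-n) + 2^(L-n-1)`; in both cases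
this says `ν = k(L, j)`.
-/

open scoped Classical

/-- The `L₂`-normalized Haar functions on `[0,1]` (half-open interval convention). -/
noncomputable def haarFn (ν : ℕ) (x : ℝ) : ℝ :=
  if ν = 0 then 1
  else
    if ((ν - 2 ^ Nat.log 2 ν : ℕ) : ℝ) / 2 ^ Nat.log 2 ν ≤ x ∧
        x < (((ν - 2 ^ Nat.log 2 ν : ℕ) : ℝ) + 1 / 2) / 2 ^ Nat.log 2 ν then
      (2 : ℝ) ^ ((Nat.log 2 ν : ℝ) / 2)
    else if (((ν - 2 ^ Nat.log 2 ν : ℕ) : ℝ) + 1 / 2) / 2 ^ Nat.log 2 ν ≤ x ∧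
        x < (((ν - 2 ^ Nat.log 2 ν : ℕ) : ℝ) + 1) / 2 ^ Nat.log 2 ν then
      -((2 : ℝ) ^ ((Nat.log 2 ν : ℝ) / 2))
    else 0

/-- Midpoint interpolation on the `2^n` dyadic subintervals of `[0,1]`. -/
noncomputable def midInterp {α : Type*} (n : ℕ) (f : ℝ → α) (x : ℝ) : α :=
  f ((↑(min (⌊x * 2 ^ n⌋₊) (2 ^ n - 1)) + (1 / 2 : ℝ)) / 2 ^ n)

/-- The index `k(ℓ,m)`: `k(n,m) = 2^n + m` and, for `ℓ > n`,
`k(ℓ,m) = 2^ℓ + m 2^{ℓ-n} + 2^{ℓ-n-1}`. -/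
def kIdx (n ℓ m : ℕ) : ℕ :=
  if ℓ = n then 2 ^ n + m else 2 ^ ℓ + m * 2 ^ (ℓ - n) + 2 ^ (ℓ - n - 1)

/-- The coefficient `c(ℓ)`: `c(n) = -2^{n/2}` and `c(ℓ) = 2^{ℓ/2}` for `ℓ > n`. -/
noncomputable def cCoef (n ℓ : ℕ) : ℝ :=
  if ℓ = n then -((2 : ℝ) ^ ((n : ℝ) / 2)) else (2 : ℝ) ^ ((ℓ : ℝ) / 2)

lemma floor_mul_eq_iff {c y : ℝ} (hc : 0 < c) (hy : 0 ≤ y) (k : ℕ) :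
    ⌊y * c⌋₊ = k ↔ k / c ≤ y ∧ y < (k + 1) / c := by
  rw [Nat.floor_eq_iff (by positivity), div_le_iff₀ hc, lt_div_iff₀ hc]

lemma haarFn_eq_ite {ν : ℕ} (hν : ν ≠ 0) {y : ℝ} (hy : 0 ≤ y) :
    haarFn ν y =
      if ⌊y * 2 ^ (Nat.log 2 ν + 1)⌋₊ = 2 * (ν - 2 ^ Nat.log 2 ν) then
        (2 : ℝ) ^ ((Nat.log 2 ν : ℝ) / 2)
      else if ⌊y * 2 ^ (Nat.log 2 ν + 1)⌋₊ = 2 * (ν - 2 ^ Nat.log 2 ν) + 1 then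
        -((2 : ℝ) ^ ((Nat.log 2 ν : ℝ) / 2))
      else 0 := by
  rw [haarFn, if_neg hν]
  generalize ν - 2 ^ Nat.log 2 ν = M
  generalize Nat.log 2 ν = L
  have hc : (0 : ℝ) < 2 ^ (L + 1) := by positivity
  have hscale : ∀ a : ℝ, a / 2 ^ L = 2 * a / 2 ^ (L + 1) := fun a => by
    rw [pow_succ]; field_simp
  have h₁ : (M / 2 ^ L ≤ y ∧ y < (M + 1 / 2) / 2 ^ L) ↔ ⌊y * 2 ^ (L + 1)⌋₊ = 2 * M := by
    rw [floor_mul_eq_iff hc hy, hscale, hscale]; push_cast; ring_nf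
  have h₂ : ((M + 1 / 2) / 2 ^ L ≤ y ∧ y < (M + 1) / 2 ^ L) ↔
      ⌊y * 2 ^ (L + 1)⌋₊ = 2 * M + 1 := by
    rw [floor_mul_eq_iff hc hy, hscale, hscale]; push_cast; ring_nf
  simp only [h₁, h₂]

lemma floor_mul_two_pow_of_le {k n : ℕ} (hk : k ≤ n) (y : ℝ) :
    ⌊y * 2 ^ k⌋₊ = ⌊y * 2 ^ n⌋₊ / 2 ^ (n - k) := by
  rw [← Nat.floor_div_natCast, Nat.cast_pow, Nat.cast_ofNat, mul_div_assoc,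
    ← pow_mul_pow_sub 2 hk, mul_div_cancel_right₀ _ (by positivity)]

lemma floor_mul_two_pow_lt {x : ℝ} (hx₀ : 0 ≤ x) (hx₁ : x < 1) (n : ℕ) :
    ⌊x * 2 ^ n⌋₊ < 2 ^ n := by
  rw [Nat.floor_lt (by positivity)]
  push_cast
  nlinarith [pow_pos (two_pos : (0 : ℝ) < 2) n]

lemma midInterp_eq_of_mem_Ico {α : Type*} (n : ℕ) (f : ℝ → α) {x : ℝ} (hx₀ : 0 ≤ x)
    (hx₁ : x < 1) : midInterp n f x = f ((⌊x * 2 ^ n⌋₊ + 1 / 2) / 2 ^ n) := by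
  rw [midInterp, min_eq_left (Nat.le_sub_one_of_lt (floor_mul_two_pow_lt hx₀ hx₁ n))]

lemma floor_midpoint_mul_two_pow (n j : ℕ) : ⌊((j : ℝ) + 1 / 2) / 2 ^ n * 2 ^ n⌋₊ = j := by
  rw [div_mul_cancel₀ _ (by positivity), Nat.floor_eq_iff (by positivity)]
  constructor <;> linarith

lemma midpoint_mul_two_pow_succ {n L : ℕ} (hn : n ≤ L) (j : ℕ) :
    ((j : ℝ) + 1 / 2) / 2 ^ n * 2 ^ (L + 1) = ((2 * j + 1) * 2 ^ (L - n) : ℕ) := by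
  rw [pow_succ, ← pow_mul_pow_sub (2 : ℝ) hn]
  push_cast
  field_simp

lemma midInterp_haarFn_of_lt {n ν : ℕ} (hν : ν < 2 ^ n) {x : ℝ} (hx₀ : 0 ≤ x) (hx₁ : x < 1) :
    midInterp n (haarFn ν) x = haarFn ν x := by
  rw [midInterp_eq_of_mem_Ico n _ hx₀ hx₁]
  rcases eq_or_ne ν 0 with rfl | hν₀
  · simp [haarFn]
  have hL : Nat.log 2 ν + 1 ≤ n := Nat.log_lt_of_lt_pow hν₀ hν
  rw [haarFn_eq_ite hν₀ (by positivity), haarFn_eq_ite hν₀ hx₀, floor_mul_two_pow_of_le hL,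
    floor_midpoint_mul_two_pow, ← floor_mul_two_pow_of_le hL]

lemma midInterp_haarFn_of_two_pow_le {n ν : ℕ} (hν : 2 ^ n ≤ ν) {x : ℝ} (hx₀ : 0 ≤ x)
    (hx₁ : x < 1) :
    midInterp n (haarFn ν) x =
      if ν = kIdx n (Nat.log 2 ν) ⌊x * 2 ^ n⌋₊ then cCoef n (Nat.log 2 ν) else 0 := by
  have hν₀ : ν ≠ 0 := ((Nat.two_pow_pos n).trans_le hν).ne'
  have hn : n ≤ Nat.log 2 ν := Nat.le_log_of_pow_le one_lt_two hν
  have hlow : 2 ^ Nat.log 2 ν ≤ ν := Nat.pow_log_le_self 2 hν₀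
  rw [midInterp_eq_of_mem_Ico n _ hx₀ hx₁, haarFn_eq_ite hν₀ (by positivity),
    midpoint_mul_two_pow_succ hn, Nat.floor_natCast, kIdx, cCoef]
  generalize ⌊x * 2 ^ n⌋₊ = j
  generalize Nat.log 2 ν = L at *
  rcases hn.eq_or_lt with rfl | hlt
  · simp only [Nat.sub_self, pow_zero, mul_one, if_true]
    split_ifs <;> first | rfl | omega
  · have hp : 2 ^ (L - n) = 2 * 2 ^ (L - n - 1) := by rw [← pow_succ']; congr 1; omega
    rw [if_neg hlt.ne', if_neg hlt.ne', hp]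
    generalize 2 ^ (L - n - 1) = p
    rw [show (2 * j + 1) * (2 * p) = 4 * (j * p) + 2 * p by ring,
      show j * (2 * p) = 2 * (j * p) by ring]
    split_ifs <;> first | rfl | omega

lemma kIdx_injective (n ℓ : ℕ) : Function.Injective (kIdx n ℓ) := by
  intro j m h
  unfold kIdx at h
  split_ifs at h
  · omega
  · exact Nat.eq_of_mul_eq_mul_right (Nat.two_pow_pos (ℓ - n)) (by omega)

lemma two_pow_le_kIdx (n ℓ m : ℕ) : 2 ^ ℓ ≤ kIdx n ℓ m := by
  unfold kIdx; split_ifs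
  · exact Nat.pow_le_pow_right two_pos (by omega) |>.trans (Nat.le_add_right _ _)
  · exact (Nat.le_add_right _ _).trans (Nat.le_add_right _ _)

lemma kIdx_lt_two_pow_succ {n ℓ m : ℕ} (hℓ : n ≤ ℓ) (hm : m < 2 ^ n) :
    kIdx n ℓ m < 2 ^ (ℓ + 1) := by
  unfold kIdx; split_ifs with h
  · subst h; rw [pow_succ]; omega
  · have hbound : m * 2 ^ (ℓ - n) + 2 ^ (ℓ - n) ≤ 2 ^ ℓ := by
      rw [← add_one_mul, ← pow_mul_pow_sub 2 hℓ]; exact Nat.mul_le_mul_right _ hm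
    have hhalf : 2 ^ (ℓ - n - 1) < 2 ^ (ℓ - n) := Nat.pow_lt_pow_right one_lt_two (by omega)
    rw [pow_succ]; omega

lemma log_kIdx {n ℓ m : ℕ} (hℓ : n ≤ ℓ) (hm : m < 2 ^ n) : Nat.log 2 (kIdx n ℓ m) = ℓ :=
  Nat.log_eq_of_pow_le_of_lt_pow (two_pow_le_kIdx n ℓ m) (kIdx_lt_two_pow_succ hℓ hm)

/-- Action of the midpoint interpolation `T_n` on the Haar basis:
`T_n e_ν = e_ν` for `ν < 2^n`; `T_n e_{k(ℓ,m)} = c(ℓ) · 1_{I_m}` for `ℓ ≥ n`,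
`m < 2^n`; and `T_n e_ν = 0` for all other `ν ≥ 2^n`. -/
theorem stmt19 (n : ℕ) :
    (∀ ν < 2 ^ n, ∀ x : ℝ, 0 ≤ x → x < 1 →
      midInterp n (haarFn ν) x = haarFn ν x) ∧
    (∀ ℓ m : ℕ, n ≤ ℓ → m < 2 ^ n → ∀ x : ℝ, 0 ≤ x → x < 1 →
      midInterp n (haarFn (kIdx n ℓ m)) x =
        cCoef n ℓ *
          (if (m : ℝ) / 2 ^ n ≤ x ∧ x < ((m : ℝ) + 1) / 2 ^ n then (1 : ℝ) else 0)) ∧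
    (∀ ν : ℕ, 2 ^ n ≤ ν → (∀ ℓ m : ℕ, n ≤ ℓ → m < 2 ^ n → ν ≠ kIdx n ℓ m) →
      ∀ x : ℝ, 0 ≤ x → x < 1 → midInterp n (haarFn ν) x = 0) := by
  refine ⟨fun ν hν x hx₀ hx₁ => midInterp_haarFn_of_lt hν hx₀ hx₁, ?_, ?_⟩
  · intro ℓ m hℓ hm x hx₀ hx₁
    have hν : 2 ^ n ≤ kIdx n ℓ m :=
      (Nat.pow_le_pow_right two_pos hℓ).trans (two_pow_le_kIdx n ℓ m)
    rw [midInterp_haarFn_of_two_pow_le hν hx₀ hx₁, log_kIdx hℓ hm, mul_ite, mul_one, mul_zero]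
    exact if_congr ((kIdx_injective n ℓ).eq_iff.trans
      (eq_comm.trans (floor_mul_eq_iff (by positivity) hx₀ m))) rfl rfl
  · intro ν hν hk x hx₀ hx₁
    rw [midInterp_haarFn_of_two_pow_le hν hx₀ hx₁,
      if_neg (hk _ _ (Nat.le_log_of_pow_le one_lt_two hν) (floor_mul_two_pow_lt hx₀ hx₁ n))]
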